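/- Let M and M' be disjoint MDPs with state sets Q and Q', and let R be a simulation relation on their direct sum. Define R₁ = R ∩ (Q × Q'). Then R₀ = id_Q ∪ R₁ ∪ id_{Q'} is also a simulation relation on the direct sum. -/

import Mathlib

open Classical
attribute [local instance 10] Classical.propDecidable

noncomputable section

universe u v w

/-- A sub-probability measure on a finite set `Q`. -/
structure SubProb (Q : Type u) [Fintype Q] where
  val : Q → ℝ
  nonneg : ∀ q, 0 ≤ val q
  sum_le_one : ∑ q, val q ≤ 1

namespace SubProb

variable {Q : Type u} {Q' : Type v} [Fintype Q] [Fintype Q']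

/-- The measure of a set of states. -/
def mass (μ : SubProb Q) (A : Set Q) : ℝ := ∑ q, A.indicator μ.val q

/-- The zero sub-probability measure. -/
def zero (Q : Type u) [Fintype Q] : SubProb Q :=
  ⟨fun _ => 0, fun _ => le_refl 0, by simp⟩

/-- Extension (by zero) of a sub-probability measure to a disjoint sum (left). -/
def toLeft (μ : SubProb Q) : SubProb (Q ⊕ Q') where
  val := Sum.elim μ.val fun _ => 0
  nonneg := by rintro (q | q); exacts [μ.nonneg q, le_refl 0]
  sum_le_one := by simpa [Fintype.sum_sum_type] using μ.sum_le_one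

/-- Extension (by zero) of a sub-probability measure to a disjoint sum (right). -/
def toRight (μ : SubProb Q') : SubProb (Q ⊕ Q') where
  val := Sum.elim (fun _ => 0) μ.val
  nonneg := by rintro (q | q); exacts [le_refl 0, μ.nonneg q]
  sum_le_one := by simpa [Fintype.sum_sum_type] using μ.sum_le_one

end SubProb

/-- The image of a set under a binary relation. -/
def relImage {A : Type u} {B : Type v} (R : A → B → Prop) (S : Set A) : Set B :=
  {b | ∃ a ∈ S, R a b}

/-- A set is `R`-closed if its image under `R` is itself. -/
def RClosed {Q : Type u} (R : Q → Q → Prop) (A : Set Q) : Prop := relImage R A = A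

/-- `μ ≼_R μ'` : `μ'` simulates `μ` with respect to `R`. -/
def SubProb.simLE {Q : Type u} [Fintype Q] (R : Q → Q → Prop) (μ μ' : SubProb Q) : Prop :=
  ∀ A : Set Q, RClosed R A → μ.mass A ≤ μ'.mass A

/-- `μ ≈_R μ'` : `μ` is equivalent to `μ'` with respect to `R`. -/
def SubProb.simEq {Q : Type u} [Fintype Q] (R : Q → Q → Prop) (μ μ' : SubProb Q) : Prop :=
  ∀ A : Set Q, RClosed R A → μ.mass A = μ'.mass A

/-- A (finite) Markov decision process over atomic propositions `AP`. -/
structure MDP (Q : Type u) [Fintype Q] (AP : Type w) where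
  init : Q
  trans : Q → Finset (SubProb Q)
  trans_nonempty : ∀ q, (trans q).Nonempty
  label : Q → Set AP

variable {Q : Type u} {Q' : Type v} {AP : Type w} [Fintype Q] [Fintype Q']

/-- A simulation relation on (the state space of) an MDP: a preorder such that related
states have the same labels and every transition of the smaller state is simulated. -/
def IsSimulation (M : MDP Q AP) (R : Q → Q → Prop) : Prop :=
  Reflexive R ∧ Transitive R ∧
    ∀ q q', R q q' → M.label q = M.label q' ∧
      ∀ μ ∈ M.trans q, ∃ μ' ∈ M.trans q', SubProb.simLE R μ μ'

/-- A bisimulation on (the state space of) an MDP. -/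
def IsBisimulation (M : MDP Q AP) (R : Q → Q → Prop) : Prop :=
  Equivalence R ∧
    ∀ q q', R q q' → M.label q = M.label q' ∧
      ∀ μ ∈ M.trans q, ∃ μ' ∈ M.trans q', SubProb.simEq R μ μ'

/-- The direct sum of two MDPs (with the initial state of the first as initial state). -/
def MDP.dsum (M : MDP Q AP) (M' : MDP Q' AP) : MDP (Q ⊕ Q') AP where
  init := Sum.inl M.init
  trans := fun x =>
    match x with
    | .inl q => (M.trans q).image SubProb.toLeft
    | .inr q => (M'.trans q).image SubProb.toRight
  trans_nonempty := by
    rintro (q | q)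
    · exact (M.trans_nonempty q).image _
    · exact (M'.trans_nonempty q).image _
  label := Sum.elim M.label M'.label

/-- `M ≼ M'` : the MDP `M'` simulates the MDP `M`. -/
def MDP.Sim (M : MDP Q AP) (M' : MDP Q' AP) : Prop :=
  ∃ R : (Q ⊕ Q') → (Q ⊕ Q') → Prop,
    IsSimulation (M.dsum M') R ∧ R (Sum.inl M.init) (Sum.inr M'.init)

/-- `M ≈ M'` : the MDPs `M` and `M'` are bisimilar. -/
def MDP.Bisim (M : MDP Q AP) (M' : MDP Q' AP) : Prop :=
  ∃ R : (Q ⊕ Q') → (Q ⊕ Q') → Prop,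
    IsBisimulation (M.dsum M') R ∧ R (Sum.inl M.init) (Sum.inr M'.init)

/-- The canonical-form relation `id_Q ∪ R₁ ∪ id_{Q'}` on a disjoint sum. -/
def canonRel (R₁ : Q → Q' → Prop) : (Q ⊕ Q') → (Q ⊕ Q') → Prop
  | .inl a, .inl b => a = b
  | .inl a, .inr b => R₁ a b
  | .inr _, .inl _ => False
  | .inr a, .inr b => a = b

/-- `R₁ ⊆ Q × Q'` is a canonical simulation of `M` by `M'`. -/
def IsCanonSim (M : MDP Q AP) (M' : MDP Q' AP) (R₁ : Q → Q' → Prop) : Prop :=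
  IsSimulation (M.dsum M') (canonRel R₁)

/-- The edge relation of the unlabeled underlying graph of an MDP. -/
def MDP.edge (M : MDP Q AP) (q₁ q₂ : Q) : Prop :=
  ∃ μ ∈ M.trans q₁, 0 < μ.val q₂

/-- A sub-probability measure on `Q` viewed as a measure on `Q × Fin (k+1)`
concentrated on level `j`. -/
def SubProb.toLevel {k : ℕ} (μ : SubProb Q) (j : Fin (k + 1)) : SubProb (Q × Fin (k + 1)) where
  val := fun x => if x.2 = j then μ.val x.1 else 0
  nonneg := by
    intro x; (try dsimp only); split
    · exact μ.nonneg x.1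
    · exact le_refl 0
  sum_le_one := by
    rw [Fintype.sum_prod_type]
    simpa using μ.sum_le_one

/-- The `k`-th unrolling of an MDP rooted at `q`. States at level `j+1` transition to the
corresponding states at level `j`; states at level `0` have only the zero transition. -/
def MDP.unroll (M : MDP Q AP) (q : Q) (k : ℕ) : MDP (Q × Fin (k + 1)) AP where
  init := (q, Fin.last k)
  trans := fun x =>
    if h : (x.2 : ℕ) = 0 then {SubProb.zero _}
    else (M.trans x.1).image fun μ =>
      μ.toLevel ⟨(x.2 : ℕ) - 1, Nat.lt_of_le_of_lt (Nat.sub_le _ _) x.2.isLt⟩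
  trans_nonempty := by
    intro x; (try dsimp only); split
    · simp
    · exact (M.trans_nonempty x.1).image _
  label := fun x => M.label x.1
mutual
/-- The safety fragment of PCTL. -/
inductive SafeF (AP : Type w) : Type w
  | tt : SafeF AP
  | ff : SafeF AP
  | atom : AP → SafeF AP
  | natom : AP → SafeF AP
  | and : SafeF AP → SafeF AP → SafeF AP
  | or : SafeF AP → SafeF AP → SafeF AP
  | pnextLt : (p : ℚ) → 0 ≤ p → p ≤ 1 → LiveF AP → SafeF AP
  | pnextLe : (p : ℚ) → 0 ≤ p → p ≤ 1 → LiveF AP → SafeF AP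
  | puntilLt : (p : ℚ) → 0 ≤ p → p ≤ 1 → LiveF AP → LiveF AP → SafeF AP
  | puntilLe : (p : ℚ) → 0 ≤ p → p ≤ 1 → LiveF AP → LiveF AP → SafeF AP

/-- The liveness fragment of PCTL. -/
inductive LiveF (AP : Type w) : Type w
  | tt : LiveF AP
  | ff : LiveF AP
  | atom : AP → LiveF AP
  | natom : AP → LiveF AP
  | and : LiveF AP → LiveF AP → LiveF AP
  | or : LiveF AP → LiveF AP → LiveF AP
  | nnextLt : (p : ℚ) → 0 ≤ p → p ≤ 1 → LiveF AP → LiveF AP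
  | nnextLe : (p : ℚ) → 0 ≤ p → p ≤ 1 → LiveF AP → LiveF AP
  | nuntilLt : (p : ℚ) → 0 ≤ p → p ≤ 1 → LiveF AP → LiveF AP → LiveF AP
  | nuntilLe : (p : ℚ) → 0 ≤ p → p ≤ 1 → LiveF AP → LiveF AP → LiveF AP
end

/-- A (history-dependent) scheduler for an MDP. -/
structure Sched (M : MDP Q AP) where
  choice : List Q → Q → SubProb Q
  valid : ∀ h q, choice h q ∈ M.trans q

/-- The probability, under scheduler `σ` with current history `h`, that an until property
`s1 U s2` is satisfied from `q` within `n` steps. -/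
def untilProbN (M : MDP Q AP) (σ : Sched M) (s1 s2 : Set Q) : ℕ → List Q → Q → ℝ
  | 0, _, q => if q ∈ s2 then 1 else 0
  | n + 1, h, q =>
    if q ∈ s2 then 1
    else if q ∈ s1 then
      ∑ q', (σ.choice h q).val q' * untilProbN M σ s1 s2 n (h ++ [q]) q'
    else 0

/-- The probability under scheduler `σ` that `s1 U s2` is satisfied from `q`. -/
def untilProb (M : MDP Q AP) (σ : Sched M) (s1 s2 : Set Q) (q : Q) : ℝ :=
  ⨆ n : ℕ, untilProbN M σ s1 s2 n [] q

mutual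
/-- Satisfaction of safety formulas at a state of an MDP (under all schedulers). -/
def satS (M : MDP Q AP) : SafeF AP → Q → Prop
  | .tt, _ => True
  | .ff, _ => False
  | .atom a, q => a ∈ M.label q
  | .natom a, q => a ∉ M.label q
  | .and φ ψ, q => satS M φ q ∧ satS M ψ q
  | .or φ ψ, q => satS M φ q ∨ satS M ψ q
  | .pnextLt p _ _ ψ, q => ∀ μ ∈ M.trans q, μ.mass {q' | satL M ψ q'} < (p : ℝ)
  | .pnextLe p _ _ ψ, q => ∀ μ ∈ M.trans q, μ.mass {q' | satL M ψ q'} ≤ (p : ℝ)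
  | .puntilLt p _ _ ψ1 ψ2, q =>
    ∀ σ : Sched M, untilProb M σ {q' | satL M ψ1 q'} {q' | satL M ψ2 q'} q < (p : ℝ)
  | .puntilLe p _ _ ψ1 ψ2, q =>
    ∀ σ : Sched M, untilProb M σ {q' | satL M ψ1 q'} {q' | satL M ψ2 q'} q ≤ (p : ℝ)

/-- Satisfaction of liveness formulas at a state of an MDP. -/
def satL (M : MDP Q AP) : LiveF AP → Q → Prop
  | .tt, _ => True
  | .ff, _ => False
  | .atom a, q => a ∈ M.label q
  | .natom a, q => a ∉ M.label q
  | .and φ ψ, q => satL M φ q ∧ satL M ψ q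
  | .or φ ψ, q => satL M φ q ∨ satL M ψ q
  | .nnextLt p _ _ ψ, q => ¬ ∀ μ ∈ M.trans q, μ.mass {q' | satL M ψ q'} < (p : ℝ)
  | .nnextLe p _ _ ψ, q => ¬ ∀ μ ∈ M.trans q, μ.mass {q' | satL M ψ q'} ≤ (p : ℝ)
  | .nuntilLt p _ _ ψ1 ψ2, q =>
    ¬ ∀ σ : Sched M, untilProb M σ {q' | satL M ψ1 q'} {q' | satL M ψ2 q'} q < (p : ℝ)
  | .nuntilLe p _ _ ψ1 ψ2, q =>
    ¬ ∀ σ : Sched M, untilProb M σ {q' | satL M ψ1 q'} {q' | satL M ψ2 q'} q ≤ (p : ℝ)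
end
mutual
/-- Weak safety formulas: safety formulas using only `≤` probability bounds. -/
def SafeF.weak : SafeF AP → Prop
  | .tt => True
  | .ff => True
  | .atom _ => True
  | .natom _ => True
  | .and φ ψ => φ.weak ∧ ψ.weak
  | .or φ ψ => φ.weak ∧ ψ.weak
  | .pnextLt _ _ _ _ => False
  | .pnextLe _ _ _ ψ => ψ.strict
  | .puntilLt _ _ _ _ _ => False
  | .puntilLe _ _ _ ψ1 ψ2 => ψ1.strict ∧ ψ2.strict

/-- Strict liveness formulas: liveness formulas using only `≤` probability bounds. -/
def LiveF.strict : LiveF AP → Prop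
  | .tt => True
  | .ff => True
  | .atom _ => True
  | .natom _ => True
  | .and φ ψ => φ.strict ∧ ψ.strict
  | .or φ ψ => φ.strict ∧ ψ.strict
  | .nnextLt _ _ _ _ => False
  | .nnextLe _ _ _ ψ => ψ.strict
  | .nuntilLt _ _ _ _ _ => False
  | .nuntilLe _ _ _ ψ1 ψ2 => ψ1.strict ∧ ψ2.strict
end

/-- An equivalence relation is compatible with an MDP if related states have equal labels. -/
def Compatible (M : MDP Q AP) (s : Setoid Q) : Prop :=
  ∀ q q', s.r q q' → M.label q = M.label q'

/-- The lifting of a sub-probability measure to the quotient: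
`[μ]([q]) = μ([q])`. -/
def SubProb.lift (s : Setoid Q) (μ : SubProb Q) : SubProb (Quotient s) where
  val := fun a => ∑ q, if Quotient.mk s q = a then μ.val q else 0
  nonneg := by
    intro a
    apply Finset.sum_nonneg
    intro q _
    split
    · exact μ.nonneg q
    · exact le_refl 0
  sum_le_one := by
    rw [Finset.sum_comm]
    simpa using μ.sum_le_one

/-- The abstract MDP of `M` with respect to an equivalence relation `s`. -/
def MDP.abst (M : MDP Q AP) (s : Setoid Q) : MDP (Quotient s) AP where
  init := Quotient.mk s M.init
  trans := fun a =>
    Finset.univ.biUnion fun q =>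
      if Quotient.mk s q = a then (M.trans q).image (SubProb.lift s) else ∅
  trans_nonempty := by
    intro a
    obtain ⟨q, rfl⟩ := Quotient.exists_rep a
    obtain ⟨μ, hμ⟩ := M.trans_nonempty q
    refine ⟨SubProb.lift s μ, Finset.mem_biUnion.2 ⟨q, Finset.mem_univ q, ?_⟩⟩
    rw [if_pos rfl]
    exact Finset.mem_image_of_mem _ hμ
  label := fun a => M.label a.out

/-- The abstraction relation `{(q, [q])}`. -/
def abstRel (s : Setoid Q) : Q → Quotient s → Prop := fun q a => Quotient.mk s q = a

/-- The refinement relation for `s' ⊆ s`: `[q]_{s'}` is related to `[q]_s` iff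
`[q]_{s'} ⊆ [q]_s`, equivalently they share a common element. -/
def refineRel (s' s : Setoid Q) : Quotient s' → Quotient s → Prop := fun a' a =>
  ∃ q : Q, Quotient.mk s' q = a' ∧ Quotient.mk s q = a

/-- `(E, R)` is a counterexample for the MDP `A` and safety formula `ψ`. -/
def IsCex {QA : Type v} [Fintype QA] (A : MDP QA AP) (ψ : SafeF AP) (E : MDP Q AP)
    (R : Q → QA → Prop) : Prop :=
  ¬ satS E ψ E.init ∧ IsCanonSim E A R

/-- Containment of MDPs (on a common state space): same initial state, same labels, and
each transition set injects into the corresponding one so that each transition agrees with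
its image except possibly being zero. -/
def MDPContained (M' M : MDP Q AP) : Prop :=
  M'.init = M.init ∧ (∀ q, M'.label q = M.label q) ∧
    ∀ q, ∃ f : SubProb Q → SubProb Q, Set.InjOn f (M'.trans q) ∧
      ∀ μ' ∈ M'.trans q, f μ' ∈ M.trans q ∧ ∀ q'', μ'.val q'' = (f μ').val q'' ∨ μ'.val q'' = 0

/-- A minimal counterexample. -/
def MinimalCex {QA : Type v} [Fintype QA] (A : MDP QA AP) (ψ : SafeF AP) (E : MDP Q AP)
    (R₀ : Q → QA → Prop) : Prop :=
  IsCex A ψ E R₀ ∧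
    (∀ (E₁ : MDP Q AP) (R₁ : Q → QA → Prop),
      IsCex A ψ E₁ R₁ → MDPContained E₁ E → E₁ = E) ∧
    (∀ R₁ : Q → QA → Prop,
      IsCex A ψ E R₁ → (∀ e a, R₁ e a → R₀ e a) → R₁ = R₀)

/-- The counterexample `(E, R₀)` for the abstraction `M/s` is valid and consistent with
`(M, s)`: there is a canonical (validating) simulation `R` of `E` by `M` with `α∘R ⊆ R₀`. -/
def ValidConsistent (M : MDP Q AP) (s : Setoid Q) {QE : Type v} [Fintype QE] (E : MDP QE AP)
    (R₀ : QE → Quotient s → Prop) : Prop :=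
  ∃ R : QE → Q → Prop, IsCanonSim E M R ∧ ∀ e q, R e q → R₀ e (Quotient.mk s q)

/-- The underlying graph of an MDP is a tree rooted at `r`. -/
def IsTreeGraph {V : Type u} (E : V → V → Prop) (r : V) : Prop :=
  (∀ q, ¬ E q r) ∧ (∀ q, q ≠ r → ∃! p, E p q) ∧ ∀ q, Relation.ReflTransGen E r q

/-! For an `R₀`-closed set `A`, the `R`-upward closure `C` of its `Q`-part is `R`-closed, contains
the `Q`-part of `A`, and (as `R₀` contains `R ∩ (Q × Q')`) has its `Q'`-part inside `A`. A
transition from a `Q`-state charges only `Q` and one from a `Q'`-state only `Q'`, so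
`μ(A) ≤ μ(C) ≤ μ'(C) ≤ μ'(A)`. -/

namespace SubProb

theorem mass_mono (μ : SubProb Q) {A B : Set Q} (h : A ⊆ B) : μ.mass A ≤ μ.mass B :=
  Finset.sum_le_sum fun q _ => Set.indicator_le_indicator_of_subset h μ.nonneg q

theorem mass_toLeft (μ : SubProb Q) (A : Set (Q ⊕ Q')) :
    (toLeft μ : SubProb (Q ⊕ Q')).mass A = μ.mass (Sum.inl ⁻¹' A) := by
  simp [mass, toLeft, Fintype.sum_sum_type, Set.indicator_apply]

theorem mass_toRight (μ : SubProb Q') (A : Set (Q ⊕ Q')) :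
    (toRight μ : SubProb (Q ⊕ Q')).mass A = μ.mass (Sum.inr ⁻¹' A) := by
  simp [mass, toRight, Fintype.sum_sum_type, Set.indicator_apply]

end SubProb

section RelImage

variable {α : Type u} {R : α → α → Prop}

theorem subset_relImage (hrefl : ∀ x, R x x) (S : Set α) : S ⊆ relImage R S :=
  fun x hx => ⟨x, hx, hrefl x⟩

theorem rClosed_relImage (hrefl : ∀ x, R x x) (htrans : ∀ ⦃x y z⦄, R x y → R y z → R x z)
    (S : Set α) : RClosed R (relImage R S) := by
  refine Set.Subset.antisymm ?_ (subset_relImage hrefl _)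
  rintro z ⟨y, ⟨x, hx, hxy⟩, hyz⟩
  exact ⟨x, hx, htrans hxy hyz⟩

end RelImage

theorem SubProb.simLE_toLeft_toRight {R R₀ : Q ⊕ Q' → Q ⊕ Q' → Prop}
    (hrefl : ∀ x, R x x) (htrans : ∀ ⦃x y z⦄, R x y → R y z → R x z)
    (hR₀ : ∀ a b, R (.inl a) (.inr b) → R₀ (.inl a) (.inr b))
    {μ : SubProb Q} {ν : SubProb Q'} (h : simLE R (toLeft μ) (toRight ν)) :
    simLE R₀ (toLeft μ) (toRight ν) := by
  intro A hA
  set C := relImage R (Sum.inl '' (Sum.inl ⁻¹' A))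
  have hAC : Sum.inl ⁻¹' A ⊆ Sum.inl ⁻¹' C :=
    fun a ha => subset_relImage hrefl _ ⟨a, ha, rfl⟩
  have hCA : Sum.inr ⁻¹' C ⊆ Sum.inr ⁻¹' A := by
    rintro b ⟨_, ⟨a, ha, rfl⟩, hab⟩
    rw [Set.mem_preimage, ← hA]
    exact ⟨_, ha, hR₀ a b hab⟩
  calc (toLeft μ : SubProb (Q ⊕ Q')).mass A
      = μ.mass (Sum.inl ⁻¹' A) := mass_toLeft μ A
    _ ≤ μ.mass (Sum.inl ⁻¹' C) := μ.mass_mono hAC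
    _ = (toLeft μ).mass C := (mass_toLeft μ C).symm
    _ ≤ (toRight ν).mass C := h C (rClosed_relImage hrefl htrans _)
    _ = ν.mass (Sum.inr ⁻¹' C) := mass_toRight ν C
    _ ≤ ν.mass (Sum.inr ⁻¹' A) := ν.mass_mono hCA
    _ = (toRight ν).mass A := (mass_toRight ν A).symm

/-- If `R` is a simulation on the direct sum of disjoint MDPs `M` and `M'`, then
`R₀ = id_Q ∪ (R ∩ (Q × Q')) ∪ id_{Q'}` is also a simulation on the direct sum. -/
theorem stmt2 {Q : Type u} {Q' : Type v} {AP : Type w} [Fintype Q] [Fintype Q']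
    (M : MDP Q AP) (M' : MDP Q' AP)
    (R : (Q ⊕ Q') → (Q ⊕ Q') → Prop) (hR : IsSimulation (M.dsum M') R) :
    IsSimulation (M.dsum M')
      (fun x y => x = y ∨
        ∃ a b, x = Sum.inl a ∧ y = Sum.inr b ∧ R (Sum.inl a) (Sum.inr b)) := by
  obtain ⟨hrefl, htrans, hsim⟩ := hR
  refine ⟨fun x => Or.inl rfl, ?_, ?_⟩
  · rintro x y z (rfl | ⟨a, b, rfl, rfl, hab⟩) (rfl | ⟨c, d, hbc, rfl, hcd⟩)
    · exact Or.inl rfl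
    · exact Or.inr ⟨c, d, hbc, rfl, hcd⟩
    · exact Or.inr ⟨a, b, rfl, rfl, hab⟩
    · exact absurd hbc Sum.inr_ne_inl
  · rintro x y (rfl | ⟨a, b, rfl, rfl, hab⟩)
    · exact ⟨rfl, fun μ hμ => ⟨μ, hμ, fun A _ => le_rfl⟩⟩
    obtain ⟨hlabel, hstep⟩ := hsim _ _ hab
    refine ⟨hlabel, fun μ hμ => ?_⟩
    obtain ⟨μ', hμ', hle⟩ := hstep μ hμ
    obtain ⟨ν, -, rfl⟩ := Finset.mem_image.1 hμ
    obtain ⟨ν', -, rfl⟩ := Finset.mem_image.1 hμ'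
    exact ⟨_, hμ', SubProb.simLE_toLeft_toRight hrefl htrans
      (fun a b h => Or.inr ⟨a, b, rfl, rfl, h⟩) hle⟩
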